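/- arXiv:2503.24094 — 5 statements merged into one kernel-verified Lean document; each statement's English description precedes it below -/
import Mathlib

section
/- Let X ∈ M_n(F) be a nonzero matrix, and let J_X ⊆ M_n(F) be the smallest subset of M_n(F) containing X ∘ Y for every Y ∈ M_n(F) and closed under the operation a ↦ a ∘ Y for every Y ∈ M_n(F); equivalently, J_X is the set of all matrices of the form ((⋯(X ∘ Y₁) ∘ Y₂) ∘ ⋯) ∘ Y_k with k ≥ 1 and Y₁, …, Y_k ∈ M_n(F). Then J_X = M_n(F). -/
/-!
The iterated Jordan products form a set `S` closed under `a ↦ a ∘ y`, and `X = X ∘ 1 ∈ S`.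
For such a set, `a ∈ S` and `a b = b a = e` give `e = a ∘ b ∈ S`. If `X` is diagonal this
yields a diagonal matrix unit `E_tt ∈ S` at once; otherwise `(X ∘ f) ∘ f = ½ f X f` for a
square-zero matrix unit `f` produces a nonzero multiple of `E_pq`, and two more products give
`E_pp`. The coordinate projections `P_T = ∑_{i ∈ T} E_ii` with `t ∈ T` are then reached one
index at a time, because `P_T ∘ (P_T + E_ts + E_st) = P_T + ½ (E_ts + E_st)` is invertible
relative to `P_T + E_ss`. Finally `P_univ = 1 ∈ S`, and `1 ∘ M = M`.
-/

def IsJordanAbsorbing (F : Type*) {A : Type*} [Field F] [Ring A] [Algebra F A] (S : Set A) :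
    Prop :=
  ∀ a ∈ S, ∀ y, (2 : F)⁻¹ • (a * y + y * a) ∈ S

theorem inv_two_smul_add_self {F A : Type*} [Field F] [AddCommGroup A] [Module F A]
    (h2 : (2 : F) ≠ 0) (x : A) : (2 : F)⁻¹ • (x + x) = x := by
  rw [← two_smul F x, smul_smul, inv_mul_cancel₀ h2, one_smul]

namespace IsJordanAbsorbing

variable {F A : Type*} [Field F] [Ring A] [Algebra F A] {S : Set A}

theorem mem_of_mul_eq_of_mul_eq (hS : IsJordanAbsorbing F S) (h2 : (2 : F) ≠ 0) {a b e : A}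
    (ha : a ∈ S) (hab : a * b = e) (hba : b * a = e) : e ∈ S := by
  simpa [hab, hba, inv_two_smul_add_self h2] using hS a ha b

theorem eq_univ_of_one_mem (hS : IsJordanAbsorbing F S) (h2 : (2 : F) ≠ 0) (h1 : (1 : A) ∈ S) :
    S = Set.univ :=
  Set.eq_univ_of_forall fun y => hS.mem_of_mul_eq_of_mul_eq h2 h1 (one_mul y) (mul_one y)

theorem smul_mul_mul_mem (hS : IsJordanAbsorbing F S) (h2 : (2 : F) ≠ 0) {a f : A}
    (ha : a ∈ S) (hf : f * f = 0) : (2 : F)⁻¹ • (f * a * f) ∈ S := by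
  have := hS _ (hS a ha f) f
  convert this using 1
  have hff : ∀ x, f * (f * x) = 0 := fun x => by rw [← mul_assoc, hf, zero_mul]
  simp only [smul_mul_assoc, mul_smul_comm, add_mul, mul_add, mul_assoc, hf, hff, mul_zero]
  match_scalars
  field_simp
  ring

/-- `a := e ∘ (e + u + v) = e + ½ (u + v)` satisfies `a b = b a = e + v u` for
`b := e - u v + 2 u + 2 v - 4 v u`. -/
theorem add_mul_mem (hS : IsJordanAbsorbing F S) (h2 : (2 : F) ≠ 0) {e u v : A} (he : e ∈ S)
    (hee : e * e = e) (heu : e * u = u) (hue : u * e = 0) (hve : v * e = v) (hev : e * v = 0)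
    (huvu : u * v * u = u) (hvuv : v * u * v = v) : e + v * u ∈ S := by
  have huu : u * u = 0 := by nth_rw 2 [← heu]; rw [← mul_assoc, hue, zero_mul]
  have hvv : v * v = 0 := by nth_rw 1 [← hve]; rw [mul_assoc, hev, mul_zero]
  -- `simp` keeps products left-associated, so the relations are needed behind a left factor too
  have hve' : ∀ x, x * v * e = x * v := fun x => by rw [mul_assoc, hve]
  have hue' : ∀ x, x * u * e = 0 := fun x => by rw [mul_assoc, hue, mul_zero]
  have huu' : ∀ x, x * u * u = 0 := fun x => by rw [mul_assoc, huu, mul_zero]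
  have hvv' : ∀ x, x * v * v = 0 := fun x => by rw [mul_assoc, hvv, mul_zero]
  have ha : e + (2 : F)⁻¹ • (u + v) ∈ S := by
    convert hS e he (e + u + v) using 1
    simp only [mul_add, add_mul, hee, heu, hue, hve, hev]
    match_scalars <;> field_simp
    norm_num
  refine hS.mem_of_mul_eq_of_mul_eq h2 ha
    (b := e - u * v + (2 : F) • u + (2 : F) • v - (4 : F) • (v * u)) ?_ ?_ <;>
  · simp only [mul_add, add_mul, mul_sub, sub_mul, smul_mul_assoc, mul_smul_comm, smul_add,
      smul_sub, ← mul_assoc, hee, heu, hue, hve, hev, huu, hvv, hve', hue', huu', hvv', huvu, hvuv,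
      zero_mul, smul_zero]
    match_scalars <;> field_simp <;> ring

end IsJordanAbsorbing

namespace Matrix

variable {ι F : Type*} [DecidableEq ι] [Field F]

def coordProj (T : Finset ι) : Matrix ι ι F := diagonal fun i => if i ∈ T then 1 else 0

theorem coordProj_insert {s : ι} {T : Finset ι} (hs : s ∉ T) :
    (coordProj (insert s T) : Matrix ι ι F) = coordProj T + single s s 1 := by
  rw [coordProj, coordProj, ← diagonal_single, diagonal_add]
  congr 1
  ext i
  by_cases hi : i = s
  · subst hi; simp [hs]
  · simp [hi]

theorem coordProj_singleton (t : ι) : (coordProj {t} : Matrix ι ι F) = single t t 1 := by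
  rw [← insert_empty_eq, coordProj_insert (Finset.notMem_empty t)]
  simp [coordProj]

variable [Fintype ι]

theorem coordProj_univ : (coordProj Finset.univ : Matrix ι ι F) = 1 := by
  simp [coordProj]

theorem diagonal_mul_single (d : ι → F) (i j : ι) (c : F) :
    diagonal d * single i j c = single i j (d i * c) := by
  ext a b
  rw [diagonal_mul]
  by_cases ha : i = a
  · subst ha; simp [single_apply]
  · simp [ha]

theorem single_mul_diagonal (d : ι → F) (i j : ι) (c : F) :
    single i j c * diagonal d = single i j (c * d j) := by
  ext a b
  rw [mul_diagonal]
  by_cases hb : j = b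
  · subst hb; simp [single_apply]
  · simp [hb]

theorem coordProj_mul_self (T : Finset ι) :
    (coordProj T : Matrix ι ι F) * coordProj T = coordProj T := by
  simp +contextual [coordProj, diagonal_mul_diagonal]

theorem coordProj_mul_single (T : Finset ι) (i j : ι) (c : F) :
    coordProj T * single i j c = if i ∈ T then single i j c else 0 := by
  split_ifs <;> simp [coordProj, diagonal_mul_single, *]

theorem single_mul_coordProj (T : Finset ι) (i j : ι) (c : F) :
    single i j c * coordProj T = if j ∈ T then single i j c else 0 := by
  split_ifs <;> simp [coordProj, single_mul_diagonal, *]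

end Matrix

namespace IsJordanAbsorbing

open Matrix

variable {ι F : Type*} [Fintype ι] [DecidableEq ι] [Field F] {S : Set (Matrix ι ι F)}

theorem coordProj_insert_mem (hS : IsJordanAbsorbing F S) (h2 : (2 : F) ≠ 0) {t s : ι}
    {T : Finset ι} (ht : t ∈ T) (hs : s ∉ T) (hT : coordProj T ∈ S) :
    coordProj (insert s T) ∈ S := by
  have := hS.add_mul_mem h2 hT (u := single t s 1) (v := single s t 1) (coordProj_mul_self T)
    (by simp [coordProj_mul_single, ht]) (by simp [single_mul_coordProj, hs])
    (by simp [single_mul_coordProj, ht]) (by simp [coordProj_mul_single, hs]) (by simp) (by simp)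
  simpa [coordProj_insert hs] using this

theorem coordProj_insert_mem_of_single_mem (hS : IsJordanAbsorbing F S) (h2 : (2 : F) ≠ 0)
    {t : ι} (ht : single t t 1 ∈ S) (T : Finset ι) : coordProj (insert t T) ∈ S := by
  induction T using Finset.induction_on with
  | empty => simpa [coordProj_singleton]
  | insert s T _ ih =>
    rw [Finset.insert_comm]
    by_cases hs : s ∈ insert t T
    · rwa [Finset.insert_eq_of_mem hs]
    · exact hS.coordProj_insert_mem h2 (Finset.mem_insert_self t T) hs ih

theorem one_mem_of_single_mem (hS : IsJordanAbsorbing F S) (h2 : (2 : F) ≠ 0) {t : ι}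
    (ht : single t t 1 ∈ S) : 1 ∈ S := by
  simpa [coordProj_univ] using hS.coordProj_insert_mem_of_single_mem h2 ht Finset.univ

theorem exists_single_mem (hS : IsJordanAbsorbing F S) (h2 : (2 : F) ≠ 0) {X : Matrix ι ι F}
    (hX : X ≠ 0) (hXS : X ∈ S) : ∃ t, single t t 1 ∈ S := by
  by_cases hdiag : X.IsDiag
  · obtain ⟨d, rfl⟩ : ∃ d, X = diagonal d := ⟨_, hdiag.diagonal_diag.symm⟩
    obtain ⟨t, ht⟩ : ∃ t, d t ≠ 0 := Function.ne_iff.mp (mt diagonal_eq_zero.mpr hX)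
    refine ⟨t, hS.mem_of_mul_eq_of_mul_eq h2 hXS (b := single t t (d t)⁻¹) ?_ ?_⟩
    · rw [diagonal_mul_single, mul_inv_cancel₀ ht]
    · rw [single_mul_diagonal, inv_mul_cancel₀ ht]
  · obtain ⟨q, p, hqp, hXqp⟩ : ∃ q p, q ≠ p ∧ X q p ≠ 0 := by
      simpa [IsDiag, Pairwise] using hdiag
    set c := (2 : F)⁻¹ * X q p
    have hc : c ≠ 0 := mul_ne_zero (inv_ne_zero h2) hXqp
    have hpq : single p q c ∈ S := by
      simpa [smul_single, c] using
        hS.smul_mul_mul_mem h2 hXS (single_mul_single_of_ne (1 : F) p q p hqp 1)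
    have hpp_qq : (2 : F)⁻¹ • (single p p 1 + single q q 1) ∈ S := by
      simpa [hc] using hS _ hpq (single q p c⁻¹)
    refine ⟨p, hS.mem_of_mul_eq_of_mul_eq h2 hpp_qq (b := single p p 2) ?_ ?_⟩ <;>
      simp [add_mul, mul_add, smul_single, hqp, hqp.symm, h2]

theorem eq_univ_of_mem_of_ne_zero (hS : IsJordanAbsorbing F S) (h2 : (2 : F) ≠ 0)
    {X : Matrix ι ι F} (hX : X ≠ 0) (hXS : X ∈ S) : S = Set.univ := by
  obtain ⟨t, ht⟩ := hS.exists_single_mem h2 hX hXS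
  exact hS.eq_univ_of_one_mem h2 (hS.one_mem_of_single_mem h2 ht)

end IsJordanAbsorbing

theorem stmt_3 {F : Type*} [Field F] (h2 : (2 : F) ≠ 0) (n : ℕ)
    (X : Matrix (Fin n) (Fin n) F) (hX : X ≠ 0) :
    ⋂₀ {S : Set (Matrix (Fin n) (Fin n) F) |
        (∀ Y, (2 : F)⁻¹ • (X * Y + Y * X) ∈ S) ∧
        (∀ a ∈ S, ∀ Y, (2 : F)⁻¹ • (a * Y + Y * a) ∈ S)} = Set.univ := by
  refine Set.sInter_eq_univ.mpr ?_
  rintro S ⟨hbase, hstep⟩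
  have hXS : X ∈ S := by simpa [inv_two_smul_add_self h2] using hbase 1
  exact IsJordanAbsorbing.eq_univ_of_mem_of_ne_zero hstep h2 hX hXS
end

section
/- Let φ : M_n(F) → M_n(F) be a nonzero map satisfying φ(X ∘ Y) = φ(X) ∘ φ(Y) for all X, Y ∈ M_n(F) and φ(0) = 0. Then for every idempotent P ∈ M_n(F), rank(φ(P)) = rank(P). -/
/-!
For an idempotent `q`, any `p` and `c ∈ F`, the Jordan relation `q ∘ p = c • q` already forces
`q * p = p * q = c • q` (multiply by `q` on either side and compare), so a Jordan-multiplicative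
map `φ` with `φ 0 = 0` sends idempotents to idempotents and preserves both orthogonality and the
order `q ≤ p` between them. After a change of basis, which is an algebra isomorphism, we may take
`P = diag(1, …, 1, 0, …, 0)` with `r = rank P` ones. The images of the diagonal matrix units
`E_ii` are then `n` orthogonal idempotents, `r` of them below `φ P` and `n - r` orthogonal to it.
None of them vanishes: if `φ E_ii = 0`, then `φ` kills every Jordan multiple of `E_ii`, and two
Jordan products at a time enlarge the diagonal idempotents in the kernel of `φ` up to `1`, so
`φ X = φ (1 ∘ X) = 0` for all `X`. Nonzero vectors in the ranges of these idempotents are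
linearly independent, which gives `r ≤ rank (φ P)` and `rank (φ P) + (n - r) ≤ n`.
-/

open Matrix LinearMap Module

def jordanMul (F : Type*) [Field F] {A : Type*} [Ring A] [Module F A] (X Y : A) : A :=
  (2 : F)⁻¹ • (X * Y + Y * X)

def IsJordanMultiplicative (F : Type*) [Field F] {A B : Type*} [Ring A] [Module F A] [Ring B]
    [Module F B] (ψ : A → B) : Prop :=
  ∀ X Y, ψ (jordanMul F X Y) = jordanMul F (ψ X) (ψ Y)

section

variable {F : Type*} [Field F]

section JordanMul

variable {A : Type*} [Ring A] [Algebra F A]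

theorem jordanMul_eq_iff (h2 : (2 : F) ≠ 0) {X Y Z : A} :
    jordanMul F X Y = Z ↔ X * Y + Y * X = (2 : F) • Z :=
  inv_smul_eq_iff₀ h2

theorem jordanMul_self (h2 : (2 : F) ≠ 0) (X : A) : jordanMul F X X = X * X := by
  rw [jordanMul_eq_iff h2, two_smul]

@[simp]
theorem jordanMul_zero_left (X : A) : jordanMul F 0 X = 0 := by
  simp [jordanMul]

theorem jordanMul_one_left (h2 : (2 : F) ≠ 0) (X : A) : jordanMul F 1 X = X := by
  rw [jordanMul_eq_iff h2, one_mul, mul_one, two_smul]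

theorem IsIdempotentElem.mul_comm_of_commute_mul_add_mul {q x : A} (hq : IsIdempotentElem q)
    (h : Commute q (q * x + x * q)) : q * x = x * q := by
  have h' := h.eq
  rw [mul_add, add_mul, ← mul_assoc, hq.eq, mul_assoc x, hq.eq, ← mul_assoc,
    add_comm _ (x * q)] at h'
  exact add_right_cancel h'

theorem IsIdempotentElem.mul_eq_smul_of_jordanMul_eq_smul (h2 : (2 : F) ≠ 0) {q x : A}
    (hq : IsIdempotentElem q) {c : F} (h : jordanMul F q x = c • q) :
    q * x = c • q ∧ x * q = c • q := by
  rw [jordanMul_eq_iff h2] at h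
  have hcomm : q * x = x * q := hq.mul_comm_of_commute_mul_add_mul <| by
    rw [h]
    exact ((Commute.refl q).smul_right c).smul_right 2
  have hqx : q * x = c • q := by
    rw [← hcomm, ← two_smul F] at h
    exact smul_right_injective A h2 h
  exact ⟨hqx, hcomm ▸ hqx⟩

end JordanMul

namespace IsJordanMultiplicative

variable {A B : Type*} [Ring A] [Algebra F A] [Ring B] [Algebra F B] {ψ : A → B}

theorem map_isIdempotentElem (h2 : (2 : F) ≠ 0) (hψ : IsJordanMultiplicative F ψ) {P : A}
    (hP : IsIdempotentElem P) : IsIdempotentElem (ψ P) := by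
  have h := hψ P P
  rwa [jordanMul_self h2, hP.eq, jordanMul_self h2, eq_comm] at h

theorem map_jordanMul_eq_zero (hψ : IsJordanMultiplicative F ψ) {X : A} (hX : ψ X = 0) (Y : A) :
    ψ (jordanMul F X Y) = 0 := by
  rw [hψ, hX, jordanMul_zero_left]

theorem eq_zero_of_map_one (h2 : (2 : F) ≠ 0) (hψ : IsJordanMultiplicative F ψ)
    (h1 : ψ 1 = 0) : ψ = 0 :=
  funext fun X => jordanMul_one_left h2 X ▸ hψ.map_jordanMul_eq_zero h1 X

theorem comp_algHom {A' : Type*} [Ring A'] [Algebra F A'] (hψ : IsJordanMultiplicative F ψ)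
    (σ : A' →ₐ[F] A) : IsJordanMultiplicative F (ψ ∘ σ) := fun X Y => by
  simp only [Function.comp_apply, jordanMul, map_smul, map_add, map_mul]
  exact hψ (σ X) (σ Y)

end IsJordanMultiplicative

namespace Matrix

variable {ι : Type*} [DecidableEq ι]

def diagIndicator (S : Finset ι) : Matrix ι ι F :=
  diagonal fun i => if i ∈ S then 1 else 0

@[simp]
theorem diagIndicator_empty : (diagIndicator ∅ : Matrix ι ι F) = 0 := by
  simp [diagIndicator]

theorem diagIndicator_insert {S : Finset ι} {t : ι} (ht : t ∉ S) :
    (diagIndicator (insert t S) : Matrix ι ι F) = single t t 1 + diagIndicator S := by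
  ext i j
  by_cases hij : i = j
  · subst hij
    by_cases hi : i = t
    · simp [diagIndicator, hi, ht]
    · simp [diagIndicator, hi, Ne.symm hi]
  · simp [diagIndicator, hij, single_apply]
    grind

variable [Fintype ι]

@[simp]
theorem diagIndicator_univ : (diagIndicator Finset.univ : Matrix ι ι F) = 1 := by
  simp [diagIndicator]

theorem diagIndicator_mul_diagIndicator (S T : Finset ι) :
    (diagIndicator S * diagIndicator T : Matrix ι ι F) = diagIndicator (S ∩ T) := by
  simp only [diagIndicator, diagonal_mul_diagonal, Finset.mem_inter, ite_zero_mul_ite_zero,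
    mul_one]

theorem isIdempotentElem_diagIndicator (S : Finset ι) :
    IsIdempotentElem (diagIndicator S : Matrix ι ι F) := by
  rw [IsIdempotentElem, diagIndicator_mul_diagIndicator, Finset.inter_self]

theorem jordanMul_diagIndicator (h2 : (2 : F) ≠ 0) (S T : Finset ι) :
    jordanMul F (diagIndicator S : Matrix ι ι F) (diagIndicator T) = diagIndicator (S ∩ T) := by
  rw [jordanMul_eq_iff h2, diagIndicator_mul_diagIndicator, diagIndicator_mul_diagIndicator,
    Finset.inter_comm T, two_smul]

theorem diagIndicator_mul_single (S : Finset ι) (s t : ι) (c : F) :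
    diagIndicator S * single s t c = if s ∈ S then single s t c else 0 := by
  ext i j
  rw [diagIndicator, diagonal_mul]
  split_ifs <;> simp only [single_apply, zero_apply] <;> aesop

theorem single_mul_diagIndicator (S : Finset ι) (s t : ι) (c : F) :
    single s t c * diagIndicator S = if t ∈ S then single s t c else 0 := by
  ext i j
  rw [diagIndicator, mul_diagonal]
  split_ifs <;> simp only [single_apply, zero_apply] <;> aesop

end Matrix

namespace IsJordanMultiplicative

variable {ι B : Type*} [Fintype ι] [DecidableEq ι] [Ring B] [Algebra F B]
  {ψ : Matrix ι ι F → B}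

theorem map_diagIndicator_insert_eq_zero (h2 : (2 : F) ≠ 0) (hψ : IsJordanMultiplicative F ψ)
    {S : Finset ι} (hS : ψ (diagIndicator S) = 0) {s t : ι} (hs : s ∈ S) (ht : t ∉ S) :
    ψ (diagIndicator (insert t S)) = 0 := by
  set E : Matrix ι ι F := single s t 1
  set E' : Matrix ι ι F := single t s 1
  set Q : Matrix ι ι F := diagIndicator (S.erase s)
  have htQ : t ∉ S.erase s := fun h => ht (Finset.mem_of_mem_erase h)
  have hsQ : s ∉ S.erase s := Finset.notMem_erase s S
  have hstep : jordanMul F (diagIndicator S) ((2 : F) • E + Q) = E + Q := by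
    rw [jordanMul_eq_iff h2]
    simp only [mul_add, add_mul, mul_smul_comm, smul_mul_assoc, E, Q,
      diagIndicator_mul_single, single_mul_diagIndicator, diagIndicator_mul_diagIndicator,
      if_pos hs, if_neg ht, Finset.inter_eq_right.mpr (Finset.erase_subset s S),
      Finset.inter_eq_left.mpr (Finset.erase_subset s S)]
    module
  have hstep' : jordanMul F (E + Q) ((2 : F) • E' + Q) = diagIndicator (insert t S) := by
    rw [jordanMul_eq_iff h2, diagIndicator_insert ht, ← Finset.insert_erase hs,
      diagIndicator_insert hsQ]
    simp only [mul_add, add_mul, mul_smul_comm, smul_mul_assoc, E, E', Q,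
      diagIndicator_mul_single, single_mul_diagIndicator, (isIdempotentElem_diagIndicator _).eq,
      single_mul_single_same, if_neg htQ, if_neg hsQ, mul_one]
    module
  have hEQ : ψ (E + Q) = 0 := hstep ▸ hψ.map_jordanMul_eq_zero hS _
  exact hstep' ▸ hψ.map_jordanMul_eq_zero hEQ _

theorem map_diagIndicator_insert_eq_zero_of_singleton (h2 : (2 : F) ≠ 0)
    (hψ : IsJordanMultiplicative F ψ) {i : ι} (hi : ψ (diagIndicator {i}) = 0) (T : Finset ι) :
    ψ (diagIndicator (insert i T)) = 0 := by
  induction T using Finset.induction_on with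
  | empty => exact hi
  | insert a T _ ih =>
    rw [Finset.insert_comm]
    by_cases ha : a ∈ insert i T
    · rwa [Finset.insert_eq_of_mem ha]
    · exact hψ.map_diagIndicator_insert_eq_zero h2 ih (Finset.mem_insert_self i T) ha

theorem map_diagIndicator_singleton_ne_zero (h2 : (2 : F) ≠ 0) (hψ : IsJordanMultiplicative F ψ)
    (hne : ψ ≠ 0) (i : ι) : ψ (diagIndicator {i}) ≠ 0 := fun hi => by
  have h1 := hψ.map_diagIndicator_insert_eq_zero_of_singleton h2 hi Finset.univ
  rw [Finset.insert_eq_of_mem (Finset.mem_univ i), diagIndicator_univ] at h1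
  exact hne (hψ.eq_zero_of_map_one h2 h1)

theorem map_diagIndicator_mul_map_singleton (h2 : (2 : F) ≠ 0) (hψ : IsJordanMultiplicative F ψ)
    (h0 : ψ 0 = 0) (S : Finset ι) (i : ι) :
    ψ (diagIndicator S) * ψ (diagIndicator {i}) =
      if i ∈ S then ψ (diagIndicator {i}) else 0 := by
  have hi := hψ.map_isIdempotentElem h2 (isIdempotentElem_diagIndicator (F := F) {i})
  have h := hψ (diagIndicator {i}) (diagIndicator S)
  rw [jordanMul_diagIndicator h2] at h
  split_ifs with hiS
  · rw [Finset.singleton_inter_of_mem hiS] at h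
    simpa using (hi.mul_eq_smul_of_jordanMul_eq_smul h2 (c := 1) (by rw [one_smul, ← h])).2
  · rw [Finset.singleton_inter_of_notMem hiS, diagIndicator_empty, h0] at h
    simpa using (hi.mul_eq_smul_of_jordanMul_eq_smul h2 (c := 0) (by rw [zero_smul, ← h])).2

theorem orthogonalIdempotents_map_diagIndicator_singleton (h2 : (2 : F) ≠ 0)
    (hψ : IsJordanMultiplicative F ψ) (h0 : ψ 0 = 0) :
    OrthogonalIdempotents fun i : ι => ψ (diagIndicator {i}) where
  idem i := hψ.map_isIdempotentElem h2 (isIdempotentElem_diagIndicator {i})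
  ortho i j hij := by
    simpa [Ne.symm hij] using hψ.map_diagIndicator_mul_map_singleton h2 h0 {i} j

end IsJordanMultiplicative

namespace OrthogonalIdempotents

variable {ι : Type*} [Fintype ι]

theorem card_le_finrank {V : Type*} [AddCommGroup V] [Module F V] [FiniteDimensional F V]
    {e : ι → Module.End F V} (he : OrthogonalIdempotents e) (hne : ∀ i, e i ≠ 0)
    {W : Submodule F V} (hW : ∀ i, range (e i) ≤ W) : Fintype.card ι ≤ finrank F W := by
  classical
  choose x hx using fun i => DFunLike.ne_iff.mp (hne i)
  set v : ι → V := fun i => e i (x i)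
  have hv : LinearIndependent F v := by
    rw [linearIndependent_iff']
    intro s g hg i hi
    have h := congrArg (e i) hg
    rw [map_sum, map_zero, Finset.sum_eq_single i (fun j _ hji => ?_) (absurd hi)] at h
    · rw [map_smul, ← Module.End.mul_apply, (he.idem i).eq] at h
      exact (smul_eq_zero.mp h).resolve_right (hx i)
    · rw [map_smul, ← Module.End.mul_apply, he.ortho hji.symm, LinearMap.zero_apply, smul_zero]
  calc Fintype.card ι = finrank F (Submodule.span F (Set.range v)) :=
        (finrank_span_eq_card hv).symm
    _ ≤ finrank F W := Submodule.finrank_mono <| Submodule.span_le.mpr <|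
        Set.range_subset_iff.mpr fun i => hW i (mem_range_self _ _)

variable {κ : Type*} [Fintype κ] [DecidableEq κ] {e : ι → Matrix κ κ F}

theorem card_le_rank (he : OrthogonalIdempotents e) (hne : ∀ i, e i ≠ 0) {p : Matrix κ κ F}
    (hp : ∀ i, p * e i = e i) : Fintype.card ι ≤ p.rank :=
  (he.map (toLinAlgEquiv' : Matrix κ κ F ≃ₐ[F] _).toRingHom).card_le_finrank
    (fun i => by simpa using hne i) (W := range p.mulVecLin) fun i => by
      change range (e i).mulVecLin ≤ _
      rw [← hp i, mulVecLin_mul]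
      exact range_comp_le_range _ _

theorem rank_add_card_le (he : OrthogonalIdempotents e) (hne : ∀ i, e i ≠ 0)
    {p : Matrix κ κ F} (hp : ∀ i, p * e i = 0) :
    p.rank + Fintype.card ι ≤ Fintype.card κ := by
  have hker := (he.map (toLinAlgEquiv' : Matrix κ κ F ≃ₐ[F] _).toRingHom).card_le_finrank
    (fun i => by simpa using hne i) (W := ker p.mulVecLin) fun i => by
      rw [range_le_ker_iff]
      exact (mulVecLin_mul p (e i)).symm.trans (by rw [hp i, mulVecLin_zero])
  have := finrank_range_add_finrank_ker p.mulVecLin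
  rw [finrank_fintype_fun_eq_card] at this
  unfold Matrix.rank
  omega

end OrthogonalIdempotents

theorem IsJordanMultiplicative.rank_map_diagIndicator {ι κ : Type*} [Fintype ι] [DecidableEq ι]
    [Fintype κ] [DecidableEq κ] {ψ : Matrix ι ι F → Matrix κ κ F} (h2 : (2 : F) ≠ 0)
    (hψ : IsJordanMultiplicative F ψ) (hne : ψ ≠ 0) (h0 : ψ 0 = 0)
    (hcard : Fintype.card κ ≤ Fintype.card ι) (S : Finset ι) :
    (ψ (diagIndicator S)).rank = S.card := by
  have he := hψ.orthogonalIdempotents_map_diagIndicator_singleton h2 h0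
  have hne' := hψ.map_diagIndicator_singleton_ne_zero h2 hne
  have hmul := hψ.map_diagIndicator_mul_map_singleton h2 h0 S
  have hlower := (he.embedding (Function.Embedding.subtype (· ∈ S))).card_le_rank
    (fun i => hne' i) fun i => by simpa [i.2] using hmul i
  have hupper := (he.embedding (Function.Embedding.subtype (· ∉ S))).rank_add_card_le
    (fun i => hne' i) fun i => by simpa [i.2] using hmul i
  rw [Fintype.card_coe] at hlower
  rw [Fintype.card_subtype_compl, Fintype.card_coe] at hupper
  have := S.card_le_univ
  omega

theorem IsIdempotentElem.exists_basis_toLin_diagIndicator {V : Type*} [AddCommGroup V]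
    [Module F V] [FiniteDimensional F V] {f : Module.End F V} (hf : IsIdempotentElem f) :
    ∃ b : Basis (Fin (finrank F (range f)) ⊕ Fin (finrank F (ker f))) F V,
      toLin b b (diagIndicator (Finset.univ.map .inl)) = f := by
  have hproj := hf.isProj_range
  let e := Submodule.prodEquivOfIsCompl _ _ hproj.isCompl
  let b := ((finBasis F (range f)).prod (finBasis F (ker f))).map e
  refine ⟨b, b.ext fun j => ?_⟩
  rw [diagIndicator, (_root_.hasEigenvector_toLin_diagonal _ j _).apply_eq_smul]
  cases j with
  | inl a => simp [b, e, hproj.map_id _ (finBasis F _ a).2]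
  | inr c => simp [b, e]

theorem IsJordanMultiplicative.rank_map_of_isIdempotentElem {κ κ' : Type*} [Fintype κ]
    [DecidableEq κ] [Fintype κ'] [DecidableEq κ'] {φ : Matrix κ κ F → Matrix κ' κ' F}
    (h2 : (2 : F) ≠ 0) (hφ : IsJordanMultiplicative F φ) (hne : φ ≠ 0) (h0 : φ 0 = 0)
    (hcard : Fintype.card κ' ≤ Fintype.card κ) {P : Matrix κ κ F} (hP : IsIdempotentElem P) :
    (φ P).rank = P.rank := by
  have hPlin : IsIdempotentElem P.mulVecLin := by
    rw [IsIdempotentElem, Module.End.mul_eq_comp, ← mulVecLin_mul, hP.eq]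
  obtain ⟨b, hb⟩ := hPlin.exists_basis_toLin_diagIndicator
  let σ := (toLinAlgEquiv b).trans (LinearMap.toMatrixAlgEquiv' : _ ≃ₐ[F] Matrix κ κ F)
  have hσ : σ (diagIndicator (Finset.univ.map .inl)) = P := by
    change LinearMap.toMatrix' (toLin b b _) = P
    rw [hb]
    exact LinearMap.toMatrix'_toLin' P
  have hrank := (hφ.comp_algHom σ.toAlgHom).rank_map_diagIndicator h2
    (fun h => hne (funext fun X => by simpa using congrFun h (σ.symm X))) (by simpa using h0)
    (by rw [Fintype.card_sum, Fintype.card_fin, Fintype.card_fin, finrank_range_add_finrank_ker,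
      finrank_fintype_fun_eq_card]; exact hcard)
    (Finset.univ.map .inl)
  rw [Function.comp_apply, AlgEquiv.coe_toAlgHom, hσ, Finset.card_map, Finset.card_univ,
    Fintype.card_fin] at hrank
  exact hrank

end

theorem stmt_12 {F : Type*} [Field F] (h2 : (2 : F) ≠ 0) (n : ℕ)
    (φ : Matrix (Fin n) (Fin n) F → Matrix (Fin n) (Fin n) F)
    (hφ : ∀ X Y : Matrix (Fin n) (Fin n) F,
      φ ((2 : F)⁻¹ • (X * Y + Y * X)) = (2 : F)⁻¹ • (φ X * φ Y + φ Y * φ X))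
    (hnz : φ ≠ 0) (h0 : φ 0 = 0)
    (P : Matrix (Fin n) (Fin n) F) (hP : P * P = P) :
    (φ P).rank = P.rank :=
  IsJordanMultiplicative.rank_map_of_isIdempotentElem h2 hφ hnz h0 le_rfl hP
end

section
/- Let φ : M_n(F) → M_n(F) be a nonzero map satisfying φ(X ∘ Y) = φ(X) ∘ φ(Y) for all X, Y ∈ M_n(F) and φ(0) = 0. Then for every idempotent P ∈ M_n(F), φ(I − P) = I − φ(P), where I is the identity matrix. -/
open Matrix Module

namespace Stmt13

variable {F : Type*} [Field F] {n : ℕ}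
lemma mul_vmv (A : Matrix (Fin n) (Fin n) F) (u w : Fin n → F) :
    A * vecMulVec u w = vecMulVec (A *ᵥ u) w := by
  ext i j
  simp [Matrix.mul_apply, vecMulVec_apply, Matrix.mulVec, dotProduct, Finset.sum_mul, mul_assoc]

lemma vmv_mul (A : Matrix (Fin n) (Fin n) F) (u w : Fin n → F) :
    vecMulVec u w * A = vecMulVec u (w ᵥ* A) := by
  ext i j
  simp [Matrix.mul_apply, vecMulVec_apply, Matrix.vecMul, dotProduct, Finset.mul_sum, mul_assoc]

lemma vmv_mul_vmv (u w x y : Fin n → F) :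
    vecMulVec u w * vecMulVec x y = (w ⬝ᵥ x) • vecMulVec u y := by
  ext i j
  simp [Matrix.mul_apply, vecMulVec_apply, dotProduct, Finset.sum_mul, Finset.mul_sum]
  ring_nf
  apply Finset.sum_congr rfl
  intro k _
  ring

lemma vmv_zero_left (w : Fin n → F) : vecMulVec (0 : Fin n → F) w = 0 := by
  ext i j; simp [vecMulVec_apply]

lemma vmv_zero_right (u : Fin n → F) : vecMulVec u (0 : Fin n → F) = 0 := by
  ext i j; simp [vecMulVec_apply]

lemma smul_vmv (c : F) (u w : Fin n → F) :
    vecMulVec (c • u) w = c • vecMulVec u w := by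
  ext i j; simp [vecMulVec_apply, mul_assoc]

lemma vmv_mulVec (u w x : Fin n → F) : vecMulVec u w *ᵥ x = (w ⬝ᵥ x) • u := by
  ext i
  simp [Matrix.mulVec, vecMulVec_apply, dotProduct, Finset.mul_sum, mul_assoc]
  simp [Finset.mul_sum, mul_comm]

lemma orth_idem (h2 : (2:F) ≠ 0) (a b : Matrix (Fin n) (Fin n) F)
    (ha : a * a = a) (hb : b * b = b) (h : a * b + b * a = 0) :
    a * b = 0 ∧ b * a = 0 := by
  have hne : a * b = -(b * a) := eq_neg_of_add_eq_zero_left h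
  have heq : a * b = b * a := by
    calc a * b = (a * a) * b := by rw [ha]
    _ = a * (a * b) := by rw [mul_assoc]
    _ = a * (-(b * a)) := by rw [hne]
    _ = -(a * b * a) := by rw [mul_neg, mul_assoc]
    _ = -((-(b*a)) * a) := by rw [hne]
    _ = b * a * a := by rw [neg_mul, neg_neg]
    _ = b * a := by rw [mul_assoc, ha]
  have : (2:F) • (a*b) = 0 := by
    rw [two_smul]; nth_rewrite 2 [heq]; exact h
  have hab : a * b = 0 := by
    rcases smul_eq_zero.mp this with h' | h'
    · exact absurd h' h2
    · exact h'
  exact ⟨hab, heq ▸ hab⟩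

lemma subidem (h2F : (2:F) ≠ 0) (a q : Matrix (Fin n) (Fin n) F) (hq : q * q = q)
    (h : a * q + q * a = a + a) : a * q = a ∧ q * a = a := by
  have h1 : q * (a * q) + q * (q * a) = q * a + q * a := by
    rw [← mul_add, h, mul_add]
  have h2 : q * a * q = q * a := by
    have : q * (q * a) = q * a := by rw [← mul_assoc, hq]
    rw [this] at h1
    have := add_right_cancel h1
    rw [← mul_assoc] at this; exact this
  have h3 : (a * q) * q + (q * a) * q = a * q + a * q := by
    rw [← add_mul, h, add_mul]
  have h4 : q * a * q = a * q := by
    have : (a * q) * q = a * q := by rw [mul_assoc, hq]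
    rw [this] at h3
    exact add_left_cancel h3
  have hcomm : a * q = q * a := by rw [← h4, h2]
  have : a * q + a * q = a + a := by nth_rewrite 2 [hcomm]; exact h
  have haq : a * q = a := by
    have h5 : (2:F) • (a * q) = (2:F) • a := by rw [two_smul, two_smul]; exact this
    exact smul_right_injective (Matrix (Fin n) (Fin n) F) h2F h5
  exact ⟨haq, hcomm ▸ haq⟩

noncomputable def rk (a : Matrix (Fin n) (Fin n) F) : ℕ :=
  finrank F (LinearMap.range (Matrix.toLin' a))

lemma exists_mulVec_ne_zero {a : Matrix (Fin n) (Fin n) F} (ha : a ≠ 0) :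
    ∃ x, a *ᵥ x ≠ 0 := by
  by_contra h
  push_neg at h
  apply ha
  ext i j
  have := congrFun (h (Pi.single j 1)) i
  simp only [Matrix.mulVec_single, mul_one, Pi.zero_apply] at this
  simpa using this

lemma rank_lt (a b : Matrix (Fin n) (Fin n) F)
    (ha : a * a = a) (hb : b * b = b) (hab : a * b = a) (hba : b * a = a)
    (hne : a ≠ b) : rk a < rk b := by
  have hle : LinearMap.range (Matrix.toLin' a) ≤ LinearMap.range (Matrix.toLin' b) := by
    rintro x ⟨y, rfl⟩
    exact ⟨a *ᵥ y, by simp [Matrix.toLin'_apply, Matrix.mulVec_mulVec, hba]⟩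
  have hcne : b - a ≠ 0 := sub_ne_zero_of_ne (Ne.symm hne)
  obtain ⟨z, hz⟩ := exists_mulVec_ne_zero hcne
  set w := (b - a) *ᵥ z with hw
  have hwb : w ∈ LinearMap.range (Matrix.toLin' b) := by
    refine ⟨w, ?_⟩
    rw [Matrix.toLin'_apply, hw, Matrix.mulVec_mulVec]
    have : b * (b - a) = b - a := by rw [mul_sub, hb, hba]
    rw [this]
  have hwa : w ∉ LinearMap.range (Matrix.toLin' a) := by
    rintro ⟨u, hu⟩
    rw [Matrix.toLin'_apply] at hu
    have h1 : a *ᵥ w = w := by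
      rw [← hu, Matrix.mulVec_mulVec, ha]
    have h2 : a *ᵥ w = 0 := by
      rw [hw, Matrix.mulVec_mulVec]
      have : a * (b - a) = 0 := by rw [mul_sub, hab, ha, sub_self]
      rw [this, Matrix.zero_mulVec]
    exact hz (by rw [← h1, h2])
  have hlt : LinearMap.range (Matrix.toLin' a) < LinearMap.range (Matrix.toLin' b) :=
    lt_of_le_of_ne hle (fun h => hwa (h ▸ hwb))
  exact Submodule.finrank_lt_finrank_of_lt hlt

lemma rank_sum_orth {ι : Type*} [DecidableEq ι] (a : ι → Matrix (Fin n) (Fin n) F)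
    (hidem : ∀ s, a s * a s = a s) (horth : ∀ s s', s ≠ s' → a s * a s' = 0)
    (hne : ∀ s, a s ≠ 0) (T : Finset ι) :
    (∑ s ∈ T, a s) * (∑ s ∈ T, a s) = ∑ s ∈ T, a s ∧ T.card ≤ rk (∑ s ∈ T, a s) := by
  classical
  induction T using Finset.cons_induction with
  | empty => simp
  | cons s T hs ih =>
    obtain ⟨ihidem, ihrk⟩ := ih
    have hat : a s * (∑ s' ∈ T, a s') = 0 := by
      rw [Finset.mul_sum]
      apply Finset.sum_eq_zero
      intro s' hs'
      exact horth s s' (by rintro rfl; exact hs hs')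
    have hta : (∑ s' ∈ T, a s') * a s = 0 := by
      rw [Finset.sum_mul]
      apply Finset.sum_eq_zero
      intro s' hs'
      exact horth s' s (by rintro rfl; exact hs hs')
    have hsum : ∑ s' ∈ Finset.cons s T hs, a s' = a s + ∑ s' ∈ T, a s' := by
      rw [Finset.sum_cons]
    rw [hsum]
    set t := ∑ s' ∈ T, a s' with ht
    have hidem' : (a s + t) * (a s + t) = a s + t := by
      rw [add_mul, mul_add, mul_add, hidem, ihidem, hat, hta]
      abel
    constructor
    · exact hidem'
    · have hlt : rk t < rk (a s + t) := by
        apply rank_lt t (a s + t) ihidem hidem'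
        · rw [mul_add, ihidem, hta]; exact zero_add t
        · rw [add_mul, ihidem, hat]; exact zero_add t
        · intro h
          apply hne s
          have : a s + t - t = t - t := by rw [← h]
          simpa using this
      rw [Finset.card_cons]
      omega

lemma idem_full_rank_eq_one (t : Matrix (Fin n) (Fin n) F)
    (hidem : t * t = t) (hrk : n ≤ rk t) : t = 1 := by
  have hr : LinearMap.range (Matrix.toLin' t) = ⊤ := by
    apply Submodule.eq_top_of_finrank_eq
    have h1 : rk t ≤ finrank F (Fin n → F) := Submodule.finrank_le _
    rw [finrank_fin_fun] at h1 ⊢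
    change rk t = n
    omega
  have hsurj : Function.Surjective (Matrix.toLin' t) := LinearMap.range_eq_top.mp hr
  have hinj : Function.Injective (Matrix.toLin' t) :=
    LinearMap.injective_iff_surjective.mpr hsurj
  let e := LinearEquiv.ofBijective (Matrix.toLin' t) ⟨hinj, hsurj⟩
  have hcomp : (Matrix.toLin' t) ∘ₗ (e.symm : (Fin n → F) →ₗ[F] (Fin n → F)) = LinearMap.id := by
    refine LinearMap.ext fun x => ?_
    simp only [LinearMap.comp_apply, LinearMap.id_apply, LinearEquiv.coe_coe]
    have : Matrix.toLin' t (e.symm x) = e (e.symm x) := rfl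
    rw [this, LinearEquiv.apply_symm_apply]
  have hmat : t * LinearMap.toMatrix' (e.symm : (Fin n → F) →ₗ[F] (Fin n → F)) = 1 := by
    rw [← LinearMap.toMatrix'_toLin' t, ← LinearMap.toMatrix'_comp, hcomp, LinearMap.toMatrix'_id]
  calc t = t * (t * LinearMap.toMatrix' (e.symm : (Fin n → F) →ₗ[F] (Fin n → F))) := by
            rw [hmat, mul_one]
  _ = (t * t) * _ := by rw [mul_assoc]
  _ = t * LinearMap.toMatrix' (e.symm : (Fin n → F) →ₗ[F] (Fin n → F)) := by rw [hidem]
  _ = 1 := hmat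

lemma rk_eq_zero {a : Matrix (Fin n) (Fin n) F} (h : rk a = 0) : a = 0 := by
  have h1 : LinearMap.range (Matrix.toLin' a) = ⊥ := Submodule.finrank_eq_zero.mp h
  have h2 : Matrix.toLin' a = 0 := LinearMap.range_eq_bot.mp h1
  rw [← LinearMap.toMatrix'_toLin' a, h2]
  exact LinearEquiv.map_zero _

lemma unit_mulVec_ne {A : Matrix (Fin n) (Fin n) F} (hA : IsUnit A)
    {x : Fin n → F} (hx : x ≠ 0) : A *ᵥ x ≠ 0 := by
  obtain ⟨u, hu⟩ := hA
  intro h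
  apply hx
  have h2' : (↑u⁻¹ : Matrix (Fin n) (Fin n) F) *ᵥ (A *ᵥ x) = 0 := by
    rw [h, Matrix.mulVec_zero]
  rwa [Matrix.mulVec_mulVec, ← hu, u.inv_mul, Matrix.one_mulVec] at h2'

section Phi

variable (φ : Matrix (Fin n) (Fin n) F → Matrix (Fin n) (Fin n) F)

lemma baseU (h2 : (2:F) ≠ 0)
    (hφ : ∀ X Y, φ ((2:F)⁻¹ • (X * Y + Y * X)) = (2:F)⁻¹ • (φ X * φ Y + φ Y * φ X))
    (h1 : φ 1 ≠ 0) (D : Matrix (Fin n) (Fin n) F) (hD : φ D = 0) (hU : IsUnit D) : False := by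
  obtain ⟨u, hu⟩ := hU
  set B : Matrix (Fin n) (Fin n) F := ↑u⁻¹ with hBdef
  have key : D * B + B * D = (2:F) • (1 : Matrix (Fin n) (Fin n) F) := by
    rw [hBdef, ← hu, u.mul_inv, u.inv_mul, two_smul]
  have h3 := hφ D B
  rw [key, smul_smul, inv_mul_cancel₀ h2, one_smul, hD, zero_mul, mul_zero, add_zero,
    smul_zero] at h3
  exact h1 h3

lemma claimC (h2 : (2:F) ≠ 0)
    (hφ : ∀ X Y, φ ((2:F)⁻¹ • (X * Y + Y * X)) = (2:F)⁻¹ • (φ X * φ Y + φ Y * φ X))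
    (h1 : φ 1 ≠ 0) :
    ∀ m : ℕ, ∀ S D : Matrix (Fin n) (Fin n) F, S * S = S → S ≠ 0 → φ D = 0 →
      S * D * S = D → IsUnit (D + (1 - S)) → rk (1 - S) ≤ m → False := by
  intro m
  induction m with
  | zero =>
    intro S D hS hS0 hD hSDS hU hrk
    have hS1 : S = 1 := (sub_eq_zero.mp (rk_eq_zero (Nat.le_zero.mp hrk))).symm
    rw [hS1, sub_self, add_zero] at hU
    exact baseU φ h2 hφ h1 D hD hU
  | succ m ih =>
    intro S D hS hS0 hD hSDS hU hrk
    classical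
    by_cases hS1 : S = 1
    · rw [hS1, sub_self, add_zero] at hU
      exact baseU φ h2 hφ h1 D hD hU
    -- derived facts
    have hSD : S * D = D := by
      have hh : S * (S * D * S) = S * D * S := by rw [← mul_assoc, ← mul_assoc, hS]
      rw [hSDS] at hh; exact hh
    have hDS : D * S = D := by
      have hh : (S * D * S) * S = S * D * S := by rw [mul_assoc (S*D) S S, hS]
      rw [hSDS] at hh; exact hh
    have hSDv : ∀ x, S *ᵥ (D *ᵥ x) = D *ᵥ x := fun x => by
      rw [Matrix.mulVec_mulVec, hSD]
    have h1S : (1 : Matrix (Fin n) (Fin n) F) - S ≠ 0 := fun h => hS1 (sub_eq_zero.mp h).symm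
    have hS1S : S * (1 - S) = 0 := by rw [mul_sub, mul_one, hS, sub_self]
    have h1SS : (1 - S) * S = 0 := by rw [sub_mul, one_mul, hS, sub_self]
    -- v
    obtain ⟨z, hz⟩ := exists_mulVec_ne_zero h1S
    obtain ⟨v, hvdef⟩ : ∃ v, v = (1 - S) *ᵥ z := ⟨_, rfl⟩
    have hv0 : v ≠ 0 := by rw [hvdef]; exact hz
    have hSv : S *ᵥ v = 0 := by
      rw [hvdef, Matrix.mulVec_mulVec, hS1S, Matrix.zero_mulVec]
    -- α
    obtain ⟨i0, hi0⟩ : ∃ i, v i ≠ 0 := Function.ne_iff.mp hv0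
    obtain ⟨α, hαdef⟩ : ∃ a, a = (v i0)⁻¹ • (Pi.single i0 1 ᵥ* (1 - S)) := ⟨_, rfl⟩
    have hαS : α ᵥ* S = 0 := by
      rw [hαdef, Matrix.smul_vecMul, Matrix.vecMul_vecMul, h1SS, Matrix.vecMul_zero, smul_zero]
    have h1Sv : (1 - S) *ᵥ v = v := by
      rw [Matrix.sub_mulVec, Matrix.one_mulVec, hSv, sub_zero]
    have hαv : α ⬝ᵥ v = 1 := by
      rw [hαdef, smul_dotProduct, ← Matrix.dotProduct_mulVec, h1Sv,
        single_dotProduct, one_mul, smul_eq_mul, inv_mul_cancel₀ hi0]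
    have hαSx : ∀ x, α ⬝ᵥ (S *ᵥ x) = 0 := fun x => by
      rw [Matrix.dotProduct_mulVec, hαS, zero_dotProduct]
    have hαD : α ᵥ* D = 0 := by
      rw [← hSD, ← Matrix.vecMul_vecMul, hαS, Matrix.zero_vecMul]
    -- p0
    obtain ⟨x0, hx0⟩ := exists_mulVec_ne_zero hS0
    obtain ⟨p0, hp0def⟩ : ∃ p, p = S *ᵥ x0 := ⟨_, rfl⟩
    have hSp0 : S *ᵥ p0 = p0 := by rw [hp0def, Matrix.mulVec_mulVec, hS]
    have hp0 : p0 ≠ 0 := by rw [hp0def]; exact hx0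
    -- Dt
    obtain ⟨Dt, hDtdef⟩ : ∃ dt, dt = D + (1 - S) := ⟨_, rfl⟩
    have hUDt : IsUnit Dt := by rw [hDtdef]; exact hU
    have hDtfix : ∀ x, S *ᵥ x = x → Dt *ᵥ x = D *ᵥ x := by
      intro x hx
      rw [hDtdef, Matrix.add_mulVec, Matrix.sub_mulVec, Matrix.one_mulVec, hx, sub_self,
        add_zero]
    obtain ⟨q0, hq0def⟩ : ∃ q, q = D *ᵥ (D *ᵥ p0) := ⟨_, rfl⟩
    have hSq0 : S *ᵥ q0 = q0 := by rw [hq0def]; exact hSDv _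
    have hq0eq : Dt *ᵥ (Dt *ᵥ p0) = q0 := by
      rw [hq0def, hDtfix p0 hSp0, hDtfix (D *ᵥ p0) (hSDv p0)]
    have hq0ne : q0 ≠ 0 := by
      rw [← hq0eq]
      exact unit_mulVec_ne hUDt (unit_mulVec_ne hUDt hp0)
    -- β
    obtain ⟨i1, hi1⟩ : ∃ i, q0 i ≠ 0 := Function.ne_iff.mp hq0ne
    obtain ⟨β, hβdef⟩ : ∃ b, b = (q0 i1)⁻¹ • (Pi.single i1 1 ᵥ* S) := ⟨_, rfl⟩
    have hβS : β ᵥ* S = β := by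
      rw [hβdef, Matrix.smul_vecMul, Matrix.vecMul_vecMul, hS]
    have hβq0 : β ⬝ᵥ q0 = 1 := by
      rw [hβdef, smul_dotProduct, ← Matrix.dotProduct_mulVec, hSq0,
        single_dotProduct, one_mul, smul_eq_mul, inv_mul_cancel₀ hi1]
    have hβSx : ∀ x, β ⬝ᵥ (S *ᵥ x) = β ⬝ᵥ x := fun x => by
      rw [Matrix.dotProduct_mulVec, hβS]
    have hβv : β ⬝ᵥ v = 0 := by
      have hh := hβSx v
      rw [hSv, dotProduct_zero] at hh
      exact hh.symm
    have hDv : D *ᵥ v = 0 := by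
      rw [← hDS, ← Matrix.mulVec_mulVec, hSv, Matrix.mulVec_zero]
    have hβDv : (β ᵥ* D) ⬝ᵥ v = 0 := by
      rw [← Matrix.dotProduct_mulVec, hDv, dotProduct_zero]
    -- scalars
    obtain ⟨ν0, hν0def⟩ : ∃ x, x = β ⬝ᵥ p0 := ⟨_, rfl⟩
    obtain ⟨tc, htcdef⟩ : ∃ x, x = if ν0 = 1 then (-1:F) else 1 := ⟨_, rfl⟩
    have htc0 : tc ≠ 0 := by
      rw [htcdef]; split
      · intro hh; apply h2; linear_combination -(2:F) * hh
      · exact one_ne_zero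
    have htcν : tc * ν0 ≠ 1 := by
      rw [htcdef]; split
      · rename_i hcase
        rw [hcase]
        intro hh; apply h2; linear_combination -hh
      · rename_i hcase
        rw [one_mul]; exact hcase
    obtain ⟨p, hpdef⟩ : ∃ x, x = tc • p0 := ⟨_, rfl⟩
    have hSp : S *ᵥ p = p := by rw [hpdef, Matrix.mulVec_smul, hSp0]
    have hDDp : D *ᵥ (D *ᵥ p) = tc • q0 := by
      rw [hpdef, Matrix.mulVec_smul, Matrix.mulVec_smul, ← hq0def]
    have hβq : β ⬝ᵥ (D *ᵥ (D *ᵥ p)) = tc := by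
      rw [hDDp, dotProduct_smul, hβq0, smul_eq_mul, mul_one]
    have hβp : β ⬝ᵥ p = tc * ν0 := by
      rw [hpdef, dotProduct_smul, hν0def, smul_eq_mul]
    -- pieces
    obtain ⟨U, hUdef⟩ : ∃ x, x = vecMulVec (D *ᵥ p) α := ⟨_, rfl⟩
    obtain ⟨Vm, hVmdef⟩ : ∃ x, x = vecMulVec v (β ᵥ* D) := ⟨_, rfl⟩
    obtain ⟨g, hgdef⟩ : ∃ x, x = vecMulVec v α := ⟨_, rfl⟩
    obtain ⟨N, hNdef⟩ : ∃ x, x = vecMulVec p β := ⟨_, rfl⟩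
    obtain ⟨W, hWdef⟩ : ∃ x, x = vecMulVec (D *ᵥ p) (β ᵥ* D) := ⟨_, rfl⟩
    obtain ⟨S', hS'def⟩ : ∃ x, x = S + g := ⟨_, rfl⟩
    obtain ⟨D', hD'def⟩ : ∃ x, x = D * D - W - tc • g := ⟨_, rfl⟩
    -- products
    have hαDp : α ⬝ᵥ (D *ᵥ p) = 0 := by rw [← hSDv p]; exact hαSx _
    have hgg : g * g = g := by rw [hgdef, vmv_mul_vmv, hαv, one_smul]
    have hSg : S * g = 0 := by rw [hgdef, mul_vmv, hSv, vmv_zero_left]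
    have hgS : g * S = 0 := by rw [hgdef, vmv_mul, hαS, vmv_zero_right]
    have hS'S' : S' * S' = S' := by
      rw [hS'def, add_mul, mul_add, mul_add, hS, hSg, hgS, hgg]
      abel
    have hUU : U * U = 0 := by rw [hUdef, vmv_mul_vmv, hαDp, zero_smul]
    have hVV : Vm * Vm = 0 := by rw [hVmdef, vmv_mul_vmv, hβDv, zero_smul]
    have hUV : U * Vm = W := by rw [hUdef, hVmdef, vmv_mul_vmv, hαv, one_smul, hWdef]
    have hVU : Vm * U = tc • g := by
      rw [hVmdef, hUdef, vmv_mul_vmv, ← Matrix.dotProduct_mulVec, hβq, hgdef]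
    have hUD : U * D = 0 := by rw [hUdef, vmv_mul, hαD, vmv_zero_right]
    have hDV : D * Vm = 0 := by rw [hVmdef, mul_vmv, hDv, vmv_zero_left]
    have hgD : g * D = 0 := by rw [hgdef, vmv_mul, hαD, vmv_zero_right]
    have hDg : D * g = 0 := by rw [hgdef, mul_vmv, hDv, vmv_zero_left]
    have hSW : S * W = W := by rw [hWdef, mul_vmv, hSDv]
    have hWS : W * S = W := by rw [hWdef, vmv_mul, Matrix.vecMul_vecMul, hDS]
    have hgW : g * W = 0 := by rw [hgdef, hWdef, vmv_mul_vmv, hαDp, zero_smul]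
    have hWg : W * g = 0 := by rw [hWdef, hgdef, vmv_mul_vmv, hβDv, zero_smul]
    -- corner property of D'
    have hS'DD : S' * (D * D) = D * D := by
      rw [hS'def, add_mul, ← mul_assoc, hSD, ← mul_assoc, hgD, zero_mul, add_zero]
    have hDDS' : (D * D) * S' = D * D := by
      rw [hS'def, mul_add, mul_assoc, hDS, mul_assoc, hDg, mul_zero, add_zero]
    have hS'W : S' * W = W := by rw [hS'def, add_mul, hSW, hgW, add_zero]
    have hWS' : W * S' = W := by rw [hS'def, mul_add, hWS, hWg, add_zero]
    have hS'g : S' * g = g := by rw [hS'def, add_mul, hSg, hgg, zero_add]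
    have hgS' : g * S' = g := by rw [hS'def, mul_add, hgS, hgg, zero_add]
    have hD'corner : S' * D' * S' = D' := by
      have e1 : S' * D' = D' := by
        rw [hD'def, mul_sub, mul_sub, hS'DD, hS'W, mul_smul_comm, hS'g]
      rw [e1, hD'def, sub_mul, sub_mul, hDDS', hWS', smul_mul_assoc, hgS']
    -- A and B are in the kernel of φ
    obtain ⟨Z1, hZ1def⟩ : ∃ x, x = S + vecMulVec ((2:F) • p) α + vecMulVec ((2:F) • v) β :=
      ⟨_, rfl⟩
    obtain ⟨Z2, hZ2def⟩ : ∃ x, x = S - vecMulVec ((2:F) • p) α - vecMulVec ((2:F) • v) β :=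
      ⟨_, rfl⟩
    obtain ⟨A, hAdef⟩ : ∃ x, x = D + U + Vm := ⟨_, rfl⟩
    obtain ⟨B, hBdef⟩ : ∃ x, x = D - U - Vm := ⟨_, rfl⟩
    have hDZ1 : D * Z1 + Z1 * D = (2:F) • A := by
      rw [hZ1def, hAdef, hUdef, hVmdef, mul_add, mul_add, add_mul, add_mul,
        mul_vmv, mul_vmv, vmv_mul, vmv_mul,
        Matrix.mulVec_smul, Matrix.mulVec_smul, hDv, smul_zero, vmv_zero_left,
        hαD, vmv_zero_right, hSD, hDS, smul_vmv, smul_vmv]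
      module
    have hDZ2 : D * Z2 + Z2 * D = (2:F) • B := by
      rw [hZ2def, hBdef, hUdef, hVmdef, mul_sub, mul_sub, sub_mul, sub_mul,
        mul_vmv, mul_vmv, vmv_mul, vmv_mul,
        Matrix.mulVec_smul, Matrix.mulVec_smul, hDv, smul_zero, vmv_zero_left,
        hαD, vmv_zero_right, hSD, hDS, smul_vmv, smul_vmv]
      module
    have hA0 : φ A = 0 := by
      have h3 := hφ D Z1
      rw [hDZ1, smul_smul, inv_mul_cancel₀ h2, one_smul, hD, zero_mul, mul_zero, add_zero,
        smul_zero] at h3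
      exact h3
    have hB0 : φ B = 0 := by
      have h3 := hφ D Z2
      rw [hDZ2, smul_smul, inv_mul_cancel₀ h2, one_smul, hD, zero_mul, mul_zero, add_zero,
        smul_zero] at h3
      exact h3
    have hABBA : A * B + B * A = (2:F) • D' := by
      have expand : A * B + B * A =
          (D*D + D*D) - (U*U + U*U) - (Vm*Vm + Vm*Vm) - (U*Vm + U*Vm) - (Vm*U + Vm*U) := by
        rw [hAdef, hBdef]; noncomm_ring
      rw [expand, hUU, hVV, hUV, hVU, hD'def]
      module
    have hD'0 : φ D' = 0 := by
      have h3 := hφ A B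
      rw [hABBA, smul_smul, inv_mul_cancel₀ h2, one_smul, hA0, hB0] at h3
      simpa using h3
    -- invertibility
    have hDtp : Dt *ᵥ p = D *ᵥ p := hDtfix p hSp
    have hDtv : Dt *ᵥ v = v := by
      rw [hDtdef, Matrix.add_mulVec, hDv, Matrix.sub_mulVec, Matrix.one_mulVec, hSv, sub_zero,
        zero_add]
    have hβDt : β ᵥ* Dt = β ᵥ* D := by
      rw [hDtdef, Matrix.vecMul_add, Matrix.vecMul_sub, Matrix.vecMul_one, hβS, sub_self,
        add_zero]
    have hαDt : α ᵥ* Dt = α := by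
      rw [hDtdef, Matrix.vecMul_add, Matrix.vecMul_sub, Matrix.vecMul_one, hαD, hαS, sub_zero,
        zero_add]
    obtain ⟨Md, hMddef⟩ : ∃ x, x = 1 - N - (tc + 1) • g := ⟨_, rfl⟩
    have hNN : N * N = (tc * ν0) • N := by rw [hNdef, vmv_mul_vmv, hβp]
    have hNg : N * g = 0 := by rw [hNdef, hgdef, vmv_mul_vmv, hβv, zero_smul]
    have hαp : α ⬝ᵥ p = 0 := by rw [← hSp]; exact hαSx _
    have hgN : g * N = 0 := by rw [hgdef, hNdef, vmv_mul_vmv, hαp, zero_smul]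
    have hDtN : Dt * N = vecMulVec (D *ᵥ p) β := by rw [hNdef, mul_vmv, hDtp]
    have hDtNDt : Dt * N * Dt = W := by
      rw [hDtN, vmv_mul, hβDt]
      exact hWdef.symm
    have hDtg : Dt * g = g := by rw [hgdef, mul_vmv, hDtv]
    have hgDt : g * Dt = g := by rw [hgdef, vmv_mul, hαDt]
    have hDtDt : Dt * Dt = D * D + (1 - S) := by
      have hD1S : D * (1 - S) = 0 := by rw [mul_sub, mul_one, hDS, sub_self]
      have h1SD : (1 - S) * D = 0 := by rw [sub_mul, one_mul, hSD, sub_self]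
      have h1S1S : (1 - S) * (1 - S) = 1 - S := by
        rw [sub_mul, one_mul, mul_sub, mul_one, hS]; abel
      have expand : (D + (1 - S)) * (D + (1 - S))
          = D * D + D * (1 - S) + (1 - S) * D + (1 - S) * (1 - S) := by noncomm_ring
      rw [hDtdef, expand, hD1S, h1SD, h1S1S]; abel
    have e2 : Dt * Md * Dt = D' + (1 - S') := by
      have lhs1 : Dt * Md = Dt - Dt * N - (tc + 1) • g := by
        rw [hMddef, mul_sub, mul_sub, mul_one, mul_smul_comm, hDtg]
      rw [lhs1, sub_mul, sub_mul, hDtNDt, smul_mul_assoc, hgDt, hDtDt, hD'def, hS'def]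
      module
    obtain ⟨x1, hx1def⟩ : ∃ x, x = (1 - tc * ν0)⁻¹ := ⟨_, rfl⟩
    obtain ⟨y1, hy1def⟩ : ∃ x, x = -(tc + 1)/tc := ⟨_, rfl⟩
    obtain ⟨Mi, hMidef⟩ : ∃ x, x = 1 + x1 • N + y1 • g := ⟨_, rfl⟩
    have h1ν : 1 - tc * ν0 ≠ 0 := sub_ne_zero.mpr (Ne.symm htcν)
    have hMdMi : Md * Mi = 1 := by
      rw [hMddef, hMidef]
      simp only [mul_add, add_mul, sub_mul, mul_sub, mul_one, one_mul, smul_mul_assoc,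
        mul_smul_comm, hNN, hNg, hgN, hgg, smul_smul, smul_zero, sub_zero, add_zero, zero_add]
      subst hx1def hy1def
      match_scalars <;> (field_simp; try ring)
    have hMiMd : Mi * Md = 1 := by
      rw [hMddef, hMidef]
      simp only [mul_add, add_mul, sub_mul, mul_sub, mul_one, one_mul, smul_mul_assoc,
        mul_smul_comm, hNN, hNg, hgN, hgg, smul_smul, smul_zero, sub_zero, add_zero, zero_add]
      subst hx1def hy1def
      match_scalars <;> (field_simp; try ring)
    have hMdUnit : IsUnit Md := ⟨⟨Md, Mi, hMdMi, hMiMd⟩, rfl⟩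
    have hUnit' : IsUnit (D' + (1 - S')) := by
      rw [← e2]; exact (hUDt.mul hMdUnit).mul hUDt
    have hgv : g *ᵥ v = v := by rw [hgdef, vmv_mulVec, hαv, one_smul]
    have hS'v : S' *ᵥ v = v := by
      rw [hS'def, Matrix.add_mulVec, hSv, hgv, zero_add]
    have hS'0 : S' ≠ 0 := by
      intro h; rw [h, Matrix.zero_mulVec] at hS'v; exact hv0 hS'v.symm
    have hg0 : g ≠ 0 := by
      intro h; rw [h, Matrix.zero_mulVec] at hgv; exact hv0 hgv.symm
    have h1S'idem : (1 - S') * (1 - S') = 1 - S' := by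
      have expand : (1 - S') * (1 - S') = 1 - S' - S' + S' * S' := by noncomm_ring
      rw [expand, hS'S']; abel
    have h1Sidem : (1 - S) * (1 - S) = 1 - S := by
      rw [sub_mul, one_mul, mul_sub, mul_one, hS]; abel
    have hS'S : S' * S = S := by rw [hS'def, add_mul, hS, hgS, add_zero]
    have hSS' : S * S' = S := by rw [hS'def, mul_add, hS, hSg, add_zero]
    have hab' : (1 - S') * (1 - S) = 1 - S' := by
      have expand : (1 - S') * (1 - S) = 1 - S - S' + S' * S := by noncomm_ring
      rw [expand, hS'S]; abel
    have hba' : (1 - S) * (1 - S') = 1 - S' := by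
      have expand : (1 - S) * (1 - S') = 1 - S' - S + S * S' := by noncomm_ring
      rw [expand, hSS']; abel
    have hne' : (1 - S') ≠ (1 - S) := by
      intro h
      have hSS : S' = S := sub_right_inj.mp h
      apply hg0
      have h4 : S + g = S := by rw [← hS'def, hSS]
      exact add_eq_left.mp h4
    have hlt := rank_lt (1 - S') (1 - S) h1S'idem h1Sidem hab' hba' hne'
    have hrk' : rk (1 - S') ≤ m := by omega
    exact ih S' D' hS'S' hS'0 hD'0 hD'corner hUnit' hrk'


lemma nonvanish (h2 : (2:F) ≠ 0)
    (hφ : ∀ X Y, φ ((2:F)⁻¹ • (X * Y + Y * X)) = (2:F)⁻¹ • (φ X * φ Y + φ Y * φ X))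
    (h1 : φ 1 ≠ 0) (Q : Matrix (Fin n) (Fin n) F) (hQ : Q * Q = Q) (hQ0 : Q ≠ 0) :
    φ Q ≠ 0 := by
  intro hφQ
  refine claimC φ h2 hφ h1 (rk (1 - Q)) Q Q hQ hQ0 hφQ ?_ ?_ le_rfl
  · rw [hQ, hQ]
  · have : Q + (1 - Q) = 1 := by abel
    rw [this]; exact isUnit_one


end Phi

set_option maxHeartbeats 2000000 in
theorem main {F : Type*} [Field F] (h2 : (2 : F) ≠ 0) (n : ℕ)
    (φ : Matrix (Fin n) (Fin n) F → Matrix (Fin n) (Fin n) F)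
    (hφ : ∀ X Y : Matrix (Fin n) (Fin n) F,
      φ ((2 : F)⁻¹ • (X * Y + Y * X)) = (2 : F)⁻¹ • (φ X * φ Y + φ Y * φ X))
    (hnz : φ ≠ 0) (h0 : φ 0 = 0)
    (P : Matrix (Fin n) (Fin n) F) (hP : P * P = P) :
    φ (1 - P) = 1 - φ P := by
  classical
  rcases Nat.eq_zero_or_pos n with hn | hn
  · subst hn
    exfalso
    apply hnz
    funext X
    ext i j
    exact absurd i.2 (Nat.not_lt_zero _)
  -- φ 1 ≠ 0
  have hhalf : ∀ X : Matrix (Fin n) (Fin n) F, (2:F)⁻¹ • (X + X) = X := by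
    intro X
    rw [← two_smul F X, smul_smul, inv_mul_cancel₀ h2, one_smul]
  have hone : ∀ X : Matrix (Fin n) (Fin n) F, (2:F)⁻¹ • (1 * X + X * 1) = X := by
    intro X; rw [one_mul, mul_one]; exact hhalf X
  have h1 : φ 1 ≠ 0 := by
    intro h1'
    apply hnz
    funext X
    have h3 := hφ 1 X
    rw [hone X, h1', zero_mul, mul_zero, add_zero, smul_zero] at h3
    exact h3
  -- squares
  have hsq : ∀ X : Matrix (Fin n) (Fin n) F, φ (X * X) = φ X * φ X := by
    intro X
    have h3 := hφ X X
    rwa [hhalf (X*X), hhalf (φ X * φ X)] at h3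
  -- Jordan-orthogonality transfers
  have horthφ : ∀ X Y : Matrix (Fin n) (Fin n) F, X * X = X → Y * Y = Y →
      X * Y = 0 → Y * X = 0 → φ X * φ Y = 0 ∧ φ Y * φ X = 0 := by
    intro X Y hX hY hXY hYX
    have h3 := hφ X Y
    rw [hXY, hYX, add_zero, smul_zero, h0] at h3
    have hsum : φ X * φ Y + φ Y * φ X = 0 := by
      have := congrArg (fun M => (2:F) • M) h3.symm
      simpa [smul_smul, mul_inv_cancel₀ h2] using this
    exact orth_idem h2 _ _ (by rw [← hsq, hX]) (by rw [← hsq, hY]) hsum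
  -- sub-idempotent transfer
  have hsubφ : ∀ X Q : Matrix (Fin n) (Fin n) F, Q * Q = Q →
      X * Q = X → Q * X = X → φ X * φ Q = φ X ∧ φ Q * φ X = φ X := by
    intro X Q hQ hXQ hQX
    have h3 := hφ X Q
    rw [hXQ, hQX, hhalf X] at h3
    have hsum : φ X * φ Q + φ Q * φ X = φ X + φ X := by
      have := congrArg (fun M => (2:F) • M) h3
      simp only [smul_smul, mul_inv_cancel₀ h2, one_smul] at this
      rw [← this, two_smul]
    exact subidem h2 _ _ (by rw [← hsq, hQ]) hsum
  -- projection π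
  obtain ⟨π, hπdef⟩ : ∃ pi : (Fin n → F) →ₗ[F] (Fin n → F), pi = Matrix.toLin' P := ⟨_, rfl⟩
  have hππ : ∀ x, π (π x) = π x := by
    intro x
    rw [hπdef]
    simp [Matrix.toLin'_apply, Matrix.mulVec_mulVec, hP]
  have hrange : ∀ x, x ∈ LinearMap.range π → π x = x := by
    rintro x ⟨y, rfl⟩; exact hππ y
  have hcompl : IsCompl (LinearMap.range π) (LinearMap.ker π) := by
    constructor
    · rw [Submodule.disjoint_def]
      intro x hx hker
      rw [← hrange x hx]
      exact LinearMap.mem_ker.mp hker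
    · rw [codisjoint_iff_le_sup]
      intro x _
      rw [Submodule.mem_sup]
      exact ⟨π x, ⟨x, rfl⟩, x - π x,
        by rw [LinearMap.mem_ker, map_sub, hππ, sub_self], by abel⟩
  let b1 : Basis (Fin (finrank F (LinearMap.range π))) F (LinearMap.range π) :=
    Module.finBasis F _
  let b2 : Basis (Fin (finrank F (LinearMap.ker π))) F (LinearMap.ker π) :=
    Module.finBasis F _
  let bV : Basis (Fin (finrank F (LinearMap.range π)) ⊕ Fin (finrank F (LinearMap.ker π)))
      F (Fin n → F) :=
    (b1.prod b2).map (Submodule.prodEquivOfIsCompl _ _ hcompl)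
  have hbleq : ∀ i, bV (Sum.inl i) = (b1 i : Fin n → F) := by
    intro i
    simp [bV, Basis.map_apply, Basis.prod_apply, Submodule.coe_prodEquivOfIsCompl]
  have hbreq : ∀ j, bV (Sum.inr j) = (b2 j : Fin n → F) := by
    intro j
    simp [bV, Basis.map_apply, Basis.prod_apply, Submodule.coe_prodEquivOfIsCompl]
  have hπbl : ∀ i, π (bV (Sum.inl i)) = bV (Sum.inl i) := by
    intro i; rw [hbleq]; exact hrange _ (b1 i).2
  have hπbr : ∀ j, π (bV (Sum.inr j)) = 0 := by
    intro j; rw [hbreq]; exact LinearMap.mem_ker.mp (b2 j).2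
  have hπx : ∀ x, π x = ∑ i, bV.repr x (Sum.inl i) • bV (Sum.inl i) := by
    intro x
    calc π x = π (∑ s, bV.repr x s • bV s) := by rw [Basis.sum_repr]
    _ = ∑ s, bV.repr x s • π (bV s) := by rw [map_sum]; simp [_root_.map_smul]
    _ = ∑ i, bV.repr x (Sum.inl i) • bV (Sum.inl i) := by
        rw [Fintype.sum_sum_type]
        simp [hπbl, hπbr]
  have hreprπl : ∀ x i, bV.repr (π x) (Sum.inl i) = bV.repr x (Sum.inl i) := by
    intro x i
    rw [hπx x]
    simp [map_sum, Basis.repr_self, Finsupp.single_apply]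
  have hreprπr : ∀ x j, bV.repr (π x) (Sum.inr j) = 0 := by
    intro x j
    rw [hπx x]
    simp [map_sum, Basis.repr_self, Finsupp.single_apply]
  -- rank one projections
  let ℓ : (Fin (finrank F (LinearMap.range π)) ⊕ Fin (finrank F (LinearMap.ker π))) →
      ((Fin n → F) →ₗ[F] (Fin n → F)) := fun s => (bV.coord s).smulRight (bV s)
  let f : (Fin (finrank F (LinearMap.range π)) ⊕ Fin (finrank F (LinearMap.ker π))) →
      Matrix (Fin n) (Fin n) F := fun s => LinearMap.toMatrix' (ℓ s)
  have hℓdiag : ∀ s, (ℓ s) ∘ₗ (ℓ s) = ℓ s := by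
    intro s
    apply LinearMap.ext; intro x
    simp [ℓ, LinearMap.smulRight_apply, Basis.coord_apply, _root_.map_smul, Basis.repr_self]
  have hℓoff : ∀ s s', s' ≠ s → (ℓ s) ∘ₗ (ℓ s') = 0 := by
    intro s s' h
    apply LinearMap.ext; intro x
    simp [ℓ, LinearMap.smulRight_apply, Basis.coord_apply, _root_.map_smul, Basis.repr_self,
      Finsupp.single_apply, h]
  have hfidem : ∀ s, f s * f s = f s := by
    intro s; rw [← LinearMap.toMatrix'_comp, hℓdiag]
  have hforth : ∀ s s', s ≠ s' → f s * f s' = 0 := by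
    intro s s' h
    rw [← LinearMap.toMatrix'_comp, hℓoff s s' (Ne.symm h)]
    exact LinearEquiv.map_zero _
  have hℓsum : (∑ s, ℓ s) = LinearMap.id := by
    apply LinearMap.ext; intro x
    rw [LinearMap.sum_apply]
    simp only [ℓ, LinearMap.smulRight_apply, Basis.coord_apply, LinearMap.id_apply]
    exact Basis.sum_repr bV x
  have hfsum : ∑ s, f s = 1 := by
    have hms := map_sum
      (LinearMap.toMatrix' : ((Fin n → F) →ₗ[F] (Fin n → F)) ≃ₗ[F]
        Matrix (Fin n) (Fin n) F).toLinearMap ℓ Finset.univ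
    simp only [LinearEquiv.coe_coe] at hms
    show ∑ s, LinearMap.toMatrix' (ℓ s) = 1
    rw [← hms, hℓsum, LinearMap.toMatrix'_id]
  have hfne : ∀ s, f s ≠ 0 := by
    intro s h
    have hz : ℓ s = 0 := by
      have := congrArg Matrix.toLin' h
      rwa [Matrix.toLin'_toMatrix', map_zero] at this
    have h4 := congrArg (fun (g : (Fin n → F) →ₗ[F] (Fin n → F)) => g (bV s)) hz
    simp [ℓ, LinearMap.smulRight_apply, Basis.coord_apply, Basis.repr_self] at h4
    exact bV.ne_zero s h4
  have hPf : P = LinearMap.toMatrix' π := by rw [hπdef, LinearMap.toMatrix'_toLin']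
  have hπℓl : ∀ i, π ∘ₗ ℓ (Sum.inl i) = ℓ (Sum.inl i) := by
    intro i; apply LinearMap.ext; intro x
    simp [ℓ, LinearMap.smulRight_apply, Basis.coord_apply, _root_.map_smul, hπbl]
  have hπℓr : ∀ j, π ∘ₗ ℓ (Sum.inr j) = 0 := by
    intro j; apply LinearMap.ext; intro x
    simp [ℓ, LinearMap.smulRight_apply, _root_.map_smul, hπbr]
  have hℓπl : ∀ i, (ℓ (Sum.inl i)) ∘ₗ π = ℓ (Sum.inl i) := by
    intro i; apply LinearMap.ext; intro x
    simp [ℓ, LinearMap.smulRight_apply, Basis.coord_apply, hreprπl]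
  have hℓπr : ∀ j, (ℓ (Sum.inr j)) ∘ₗ π = 0 := by
    intro j; apply LinearMap.ext; intro x
    simp [ℓ, LinearMap.smulRight_apply, Basis.coord_apply, hreprπr]
  have hPfl : ∀ i, P * f (Sum.inl i) = f (Sum.inl i) := by
    intro i; rw [hPf, ← LinearMap.toMatrix'_comp, hπℓl]
  have hPfr : ∀ j, P * f (Sum.inr j) = 0 := by
    intro j; rw [hPf, ← LinearMap.toMatrix'_comp, hπℓr]
    exact LinearEquiv.map_zero _
  have hfPl : ∀ i, f (Sum.inl i) * P = f (Sum.inl i) := by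
    intro i; rw [hPf, ← LinearMap.toMatrix'_comp, hℓπl]
  have hfPr : ∀ j, f (Sum.inr j) * P = 0 := by
    intro j; rw [hPf, ← LinearMap.toMatrix'_comp, hℓπr]
    exact LinearEquiv.map_zero _
  -- images
  let a : (Fin (finrank F (LinearMap.range π)) ⊕ Fin (finrank F (LinearMap.ker π))) →
      Matrix (Fin n) (Fin n) F := fun s => φ (f s)
  have haidem : ∀ s, a s * a s = a s := by
    intro s; show φ (f s) * φ (f s) = φ (f s); rw [← hsq, hfidem]
  have haorth : ∀ s s', s ≠ s' → a s * a s' = 0 := fun s s' h =>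
    (horthφ _ _ (hfidem s) (hfidem s') (hforth s s' h) (hforth s' s (Ne.symm h))).1
  have hane : ∀ s, a s ≠ 0 := fun s => nonvanish φ h2 hφ h1 (f s) (hfidem s) (hfne s)
  have h1P : (1 - P) * (1 - P) = 1 - P := by
    rw [sub_mul, one_mul, mul_sub, mul_one, hP]; abel
  have hqr : φ P * φ (1-P) = 0 ∧ φ (1-P) * φ P = 0 :=
    horthφ _ _ hP h1P (by rw [mul_sub, mul_one, hP, sub_self])
      (by rw [sub_mul, one_mul, hP, sub_self])
  have hal : ∀ i, a (Sum.inl i) * φ P = a (Sum.inl i) ∧ φ P * a (Sum.inl i) = a (Sum.inl i) :=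
    fun i => hsubφ (f (Sum.inl i)) P hP (hfPl i) (hPfl i)
  have har : ∀ j, a (Sum.inr j) * φ (1-P) = a (Sum.inr j) ∧
      φ (1-P) * a (Sum.inr j) = a (Sum.inr j) := by
    intro j
    apply hsubφ _ _ h1P
    · rw [mul_sub, mul_one, hfPr j, sub_zero]
    · rw [sub_mul, one_mul, hPfr j, sub_zero]
  have hsum1 : ∑ s, a s = 1 := by
    obtain ⟨hidem, hcard⟩ := rank_sum_orth a haidem haorth hane Finset.univ
    apply idem_full_rank_eq_one _ hidem
    have hc : (Finset.univ : Finset (Fin (finrank F (LinearMap.range π)) ⊕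
        Fin (finrank F (LinearMap.ker π)))).card
        = finrank F (LinearMap.range π) + finrank F (LinearMap.ker π) := by simp
    have hkm : finrank F (LinearMap.range π) + finrank F (LinearMap.ker π) = n := by
      have := LinearMap.finrank_range_add_finrank_ker π
      rwa [finrank_fin_fun] at this
    omega
  have hqs : φ P = ∑ i, a (Sum.inl i) := by
    calc φ P = φ P * ∑ s, a s := by rw [hsum1, mul_one]
    _ = ∑ s, φ P * a s := by rw [Finset.mul_sum]
    _ = ∑ i, a (Sum.inl i) := by
        rw [Fintype.sum_sum_type]
        have hz2 : ∀ j, φ P * a (Sum.inr j) = 0 := by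
          intro j
          have hh : a (Sum.inr j) = φ (1-P) * a (Sum.inr j) := ((har j).2).symm
          rw [hh, ← mul_assoc, hqr.1, zero_mul]
        simp [fun i => (hal i).2, hz2]
  have hrs : φ (1-P) = ∑ j, a (Sum.inr j) := by
    calc φ (1-P) = φ (1-P) * ∑ s, a s := by rw [hsum1, mul_one]
    _ = ∑ s, φ (1-P) * a s := by rw [Finset.mul_sum]
    _ = ∑ j, a (Sum.inr j) := by
        rw [Fintype.sum_sum_type]
        have hz2 : ∀ i, φ (1-P) * a (Sum.inl i) = 0 := by
          intro i
          have hh : a (Sum.inl i) = φ P * a (Sum.inl i) := ((hal i).2).symm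
          rw [hh, ← mul_assoc, hqr.2, zero_mul]
        simp [fun j => (har j).2, hz2]
  have hfinal : φ P + φ (1-P) = 1 := by
    rw [hqs, hrs, ← Fintype.sum_sum_type, hsum1]
  exact eq_sub_of_add_eq' hfinal


end Stmt13

theorem stmt_13 {F : Type*} [Field F] (h2 : (2 : F) ≠ 0) (n : ℕ)
    (φ : Matrix (Fin n) (Fin n) F → Matrix (Fin n) (Fin n) F)
    (hφ : ∀ X Y : Matrix (Fin n) (Fin n) F,
      φ ((2 : F)⁻¹ • (X * Y + Y * X)) = (2 : F)⁻¹ • (φ X * φ Y + φ Y * φ X))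
    (hnz : φ ≠ 0) (h0 : φ 0 = 0)
    (P : Matrix (Fin n) (Fin n) F) (hP : P * P = P) :
    φ (1 - P) = 1 - φ P := by
  exact Stmt13.main h2 n φ hφ hnz h0 P hP
end

section
/- Let n ≥ 2 and let φ : M_n(F) → M_n(F) be a map satisfying φ(X ∘ Y) = φ(X) ∘ φ(Y) for all X, Y ∈ M_n(F) and φ(0) = 0. Then φ(PXP) = φ(P)·φ(X)·φ(P) for every X ∈ M_n(F) and every idempotent P ∈ M_n(F). -/
theorem stmt_17 {F : Type*} [Field F] (h2 : (2 : F) ≠ 0) (n : ℕ) (hn : 2 ≤ n)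
    (φ : Matrix (Fin n) (Fin n) F → Matrix (Fin n) (Fin n) F)
    (hφ : ∀ X Y : Matrix (Fin n) (Fin n) F,
      φ ((2 : F)⁻¹ • (X * Y + Y * X)) = (2 : F)⁻¹ • (φ X * φ Y + φ Y * φ X))
    (h0 : φ 0 = 0)
    (X P : Matrix (Fin n) (Fin n) F) (hP : P * P = P) :
    φ (P * X * P) = φ P * φ X * φ P := by
  -- basic scalar helpers
  have half : ∀ a : Matrix (Fin n) (Fin n) F, (2 : F)⁻¹ • (a + a) = a := by
    intro a
    rw [← two_smul F a, smul_smul, inv_mul_cancel₀ h2, one_smul]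
  have dbl : ∀ a b : Matrix (Fin n) (Fin n) F,
      a = (2 : F)⁻¹ • b → b = a + a := by
    intro a b h
    rw [h, ← smul_add, ← two_smul F b, smul_smul, inv_mul_cancel₀ h2, one_smul]
  have halve : ∀ a b : Matrix (Fin n) (Fin n) F, a + a = b + b → a = b := by
    intro a b h
    have h' := congrArg (fun z : Matrix (Fin n) (Fin n) F => (2 : F)⁻¹ • z) h
    simpa only [half] using h'
  -- fixed point lemma: r idempotent, m = r∘m  ⟹  r*m = m ∧ m*r = m
  have fix : ∀ r m : Matrix (Fin n) (Fin n) F,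
      r * r = r → m = (2 : F)⁻¹ • (r * m + m * r) →
      r * m = m ∧ m * r = m := by
    intro r m hr h
    have hd : r * m + m * r = m + m := dbl _ _ h
    have h1 : r * m * r = r * m := by
      have h' := congrArg (fun z : Matrix (Fin n) (Fin n) F => r * z) hd
      simp only [mul_add] at h'
      simp only [← mul_assoc] at h'
      simp only [hr] at h'
      exact add_left_cancel h'
    have h2' : r * m * r = m * r := by
      have h' := congrArg (fun z : Matrix (Fin n) (Fin n) F => z * r) hd
      simp only [add_mul] at h'
      rw [mul_assoc m r r, hr] at h'
      exact add_right_cancel h'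
    have hcomm : r * m = m * r := h1.symm.trans h2'
    have hsum : r * m + r * m = m + m := by rw [← hcomm] at hd; exact hd
    have hrm : r * m = m := halve _ _ hsum
    exact ⟨hrm, by rw [← hcomm]; exact hrm⟩
  -- sandwich lemma: if q*w = q and w*q = q then q*(w∘N)*q = q*N*q
  have key : ∀ q w N : Matrix (Fin n) (Fin n) F, q * w = q → w * q = q →
      q * ((2 : F)⁻¹ • (w * N + N * w)) * q = q * N * q := by
    intro q w N hqw hwq
    rw [mul_smul_comm, smul_mul_assoc]
    have h : q * (w * N + N * w) * q = q * N * q + q * N * q := by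
      rw [mul_add, add_mul, ← mul_assoc q w N, hqw, ← mul_assoc q N w,
        mul_assoc (q * N) w q, hwq]
    rw [h]
    exact half _
  -- the involution U = 2P - 1
  set U : Matrix (Fin n) (Fin n) F := P + P - 1 with hUdef
  have hUU : U * U = 1 := by
    have h : U * U = (P * P + P * P + P * P + P * P) - (P + P + P + P) + 1 := by
      rw [hUdef]; noncomm_ring
    rw [h]; simp only [hP]; abel
  have hiii : U * P + P * U = P + P := by
    have h : U * P + P * U = (P * P + P * P + P * P + P * P) - (P + P) := by
      rw [hUdef]; noncomm_ring
    rw [h]; simp only [hP]; abel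
  have hiv : U * X + X * U = (P * X + X * P - X) + (P * X + X * P - X) := by
    rw [hUdef]; noncomm_ring
  have hv : U * (P * X + X * P - X) + (P * X + X * P - X) * U =
      (P * X * P + P * X * P - (P * X + X * P - X)) +
      (P * X * P + P * X * P - (P * X + X * P - X)) := by
    have h : U * (P * X + X * P - X) + (P * X + X * P - X) * U =
        (P * P * X + P * P * X + X * (P * P) + X * (P * P) +
          P * X * P + P * X * P + P * X * P + P * X * P) -
        (P * X + P * X + P * X + P * X) - (X * P + X * P + X * P + X * P)
          + (X + X) := by
      rw [hUdef]; noncomm_ring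
    rw [h]; simp only [hP]; abel
  have hvi : P * (P * X * P + P * X * P - (P * X + X * P - X)) +
      (P * X * P + P * X * P - (P * X + X * P - X)) * P =
      P * X * P + P * X * P := by
    have h : P * (P * X * P + P * X * P - (P * X + X * P - X)) +
        (P * X * P + P * X * P - (P * X + X * P - X)) * P =
        ((P * P) * X * P + (P * P) * X * P + P * X * (P * P) + P * X * (P * P)
          + P * X + X * P) -
        ((P * P) * X + X * (P * P) + P * X * P + P * X * P) := by
      noncomm_ring
    rw [h]; simp only [hP]; abel
  have hvii : P * (P * X * P) + (P * X * P) * P = P * X * P + P * X * P := by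
    have h : P * (P * X * P) + (P * X * P) * P =
        (P * P) * X * P + P * X * (P * P) := by noncomm_ring
    rw [h]; simp only [hP]
  -- argument simplifications
  have a11 : (2 : F)⁻¹ • ((1 : Matrix (Fin n) (Fin n) F) * 1 + 1 * 1) = 1 := by
    rw [one_mul]; exact half 1
  have a1P : (2 : F)⁻¹ • ((1 : Matrix (Fin n) (Fin n) F) * P + P * 1) = P := by
    rw [one_mul, mul_one]; exact half P
  have aPP : (2 : F)⁻¹ • (P * P + P * P) = P := by
    rw [hP]; exact half P
  have aUU : (2 : F)⁻¹ • (U * U + U * U) = (1 : Matrix (Fin n) (Fin n) F) := by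
    rw [hUU]; exact half 1
  have aUP : (2 : F)⁻¹ • (U * P + P * U) = P := by
    rw [hiii]; exact half P
  have aUX : (2 : F)⁻¹ • (U * X + X * U) = P * X + X * P - X := by
    rw [hiv]; exact half _
  have aUX1 : (2 : F)⁻¹ • (U * (P * X + X * P - X) + (P * X + X * P - X) * U)
      = P * X * P + P * X * P - (P * X + X * P - X) := by
    rw [hv]; exact half _
  have aPG : (2 : F)⁻¹ • (P * (P * X * P + P * X * P - (P * X + X * P - X)) +
      (P * X * P + P * X * P - (P * X + X * P - X)) * P) = P * X * P := by
    rw [hvi]; exact half _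
  have aPZ : (2 : F)⁻¹ • (P * (P * X * P) + (P * X * P) * P) = P * X * P := by
    rw [hvii]; exact half _
  -- φ-side equations
  have E1 := hφ 1 1
  rw [a11] at E1
  have hee : φ 1 * φ 1 = φ 1 := halve _ _ (dbl _ _ E1)
  have E3 := hφ P P
  rw [aPP] at E3
  have hqq : φ P * φ P = φ P := halve _ _ (dbl _ _ E3)
  have E2 := hφ 1 P
  rw [a1P] at E2
  obtain ⟨heq, hqe⟩ := fix (φ 1) (φ P) hee E2
  have E4 := hφ U U
  rw [aUU] at E4
  have huu : φ U * φ U = φ 1 := halve _ _ (dbl _ _ E4)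
  have E5 := hφ U P
  rw [aUP] at E5
  have hd5 : φ U * φ P + φ P * φ U = φ P + φ P := dbl _ _ E5
  -- derive uq = qu = q
  have h1 : φ P + φ U * φ P * φ U = φ U * φ P + φ U * φ P := by
    have h' := congrArg (fun z : Matrix (Fin n) (Fin n) F => φ U * z) hd5
    simp only [mul_add] at h'
    rw [← mul_assoc (φ U) (φ U) (φ P), huu, heq, ← mul_assoc (φ U) (φ P) (φ U)]
      at h'
    exact h'
  have h2' : φ U * φ P * φ U + φ P = φ P * φ U + φ P * φ U := by
    have h' := congrArg (fun z : Matrix (Fin n) (Fin n) F => z * φ U) hd5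
    simp only [add_mul] at h'
    rw [mul_assoc (φ P) (φ U) (φ U), huu, hqe] at h'
    exact h'
  have h3 : φ U * φ P + φ U * φ P = φ P * φ U + φ P * φ U := by
    have h4 := h1.symm
    rw [add_comm (φ P) (φ U * φ P * φ U)] at h4
    exact h4.trans h2'
  have hcomm : φ U * φ P = φ P * φ U := halve _ _ h3
  have huq : φ U * φ P = φ P := by
    refine halve _ _ ?_
    rw [← hcomm] at hd5
    exact hd5
  have hqu : φ P * φ U = φ P := by rw [← hcomm]; exact huq
  -- the chain of φ-values
  have E6 := hφ U X
  rw [aUX] at E6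
  have E7 := hφ U (P * X + X * P - X)
  rw [aUX1] at E7
  have E8 := hφ P (P * X * P + P * X * P - (P * X + X * P - X))
  rw [aPG] at E8
  have E9 := hφ P (P * X * P)
  rw [aPZ] at E9
  obtain ⟨f1, f2⟩ := fix (φ P) (φ (P * X * P)) hqq E9
  -- final computation
  have hB : φ (P * X * P) = φ P * φ (P * X * P) * φ P := by
    rw [f1, f2]
  calc φ (P * X * P) = φ P * φ (P * X * P) * φ P := hB
    _ = φ P * φ (P * X * P + P * X * P - (P * X + X * P - X)) * φ P := by
        rw [E8]
        exact key (φ P) (φ P)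
          (φ (P * X * P + P * X * P - (P * X + X * P - X))) hqq hqq
    _ = φ P * φ (P * X + X * P - X) * φ P := by
        rw [E7]
        exact key (φ P) (φ U) (φ (P * X + X * P - X)) hqu huq
    _ = φ P * φ X * φ P := by
        rw [E6]
        exact key (φ P) (φ U) (φ X) hqu huq
end

section
/- Let F be a field with characteristic equal to 2 and let n ≥ 2. Then there exists a map φ : M_n(F) → M_n(F) satisfying φ(XY + YX) = φ(X)φ(Y) + φ(Y)φ(X) for all X, Y ∈ M_n(F) which is neither constant nor additive. (Concretely, the map sending a fixed trace-one matrix A to a fixed nonzero matrix and every other matrix to zero has this property, because every matrix of the form XY + YX has trace zero in characteristic 2.) -/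
/-!
In characteristic 2 every Jordan product `X * Y + Y * X` has trace `2 * trace (X * Y) = 0`, so a
matrix `A` of trace one is never a Jordan product. The map sending `A` to a fixed `B ≠ 0` and
everything else to `0` then turns both sides of the Jordan identity into `0`, since `B * B + B * B`
vanishes in characteristic 2. It is visibly not constant, and it is not additive because
`D + (D + A) = A` while neither `D` nor `D + A` equals `A`, for any `D ∉ {0, A}`.
-/

section IndicatorMap

variable {R M : Type*} [DecidableEq R]

theorem Pi.single_not_const [Zero M] {A A' : R} {B : M} (hA' : A' ≠ A) (hB : B ≠ 0) :
    ¬∃ C : M, ∀ X, (Pi.single A B : R → M) X = C := by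
  rintro ⟨C, hC⟩
  have hAC : B = C := by simpa using hC A
  have hA'C : 0 = C := by simpa [Pi.single_eq_of_ne hA'] using hC A'
  exact hB (hAC.trans hA'C.symm)

variable [Ring R] [CharP R 2]

theorem Pi.single_not_additive [AddZeroClass M] {A D : R} {B : M} (hB : B ≠ 0) (hD0 : D ≠ 0)
    (hDA : D ≠ A) :
    ¬∀ X Y, (Pi.single A B : R → M) (X + Y) =
      (Pi.single A B : R → M) X + (Pi.single A B : R → M) Y := by
  intro h
  have hDA' : D + A ≠ A := fun h' => hD0 (add_eq_right.mp h')
  have hsum : D + (D + A) = A := by rw [← add_assoc, CharTwo.add_self_eq_zero, zero_add]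
  have := h D (D + A)
  rw [hsum, Pi.single_eq_same, Pi.single_eq_of_ne hDA, Pi.single_eq_of_ne hDA', add_zero] at this
  exact hB this

theorem Pi.single_jordan_mul {A : R} (B : R) (hA : ∀ X Y : R, X * Y + Y * X ≠ A) (X Y : R) :
    (Pi.single A B : R → R) (X * Y + Y * X) =
      (Pi.single A B : R → R) X * (Pi.single A B : R → R) Y +
        (Pi.single A B : R → R) Y * (Pi.single A B : R → R) X := by
  rw [Pi.single_eq_of_ne (hA X Y)]
  by_cases hX : X = A <;> by_cases hY : Y = A <;> simp [hX, hY, CharTwo.add_self_eq_zero]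

end IndicatorMap

theorem Matrix.trace_jordan_mul_eq_zero {n R : Type*} [Fintype n] [CommRing R] [CharP R 2]
    (X Y : Matrix n n R) : (X * Y + Y * X).trace = 0 := by
  rw [Matrix.trace_add, Matrix.trace_mul_comm Y X, CharTwo.add_self_eq_zero]

theorem Matrix.ne_jordan_mul_of_trace_ne_zero {n R : Type*} [Fintype n] [CommRing R] [CharP R 2]
    {A : Matrix n n R} (hA : A.trace ≠ 0) (X Y : Matrix n n R) : X * Y + Y * X ≠ A := by
  rintro rfl
  exact hA (Matrix.trace_jordan_mul_eq_zero X Y)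

theorem stmt_19 {F : Type*} [Field F] (h2 : ringChar F = 2) (n : ℕ) (hn : 2 ≤ n) :
    ∃ φ : Matrix (Fin n) (Fin n) F → Matrix (Fin n) (Fin n) F,
      (∀ X Y : Matrix (Fin n) (Fin n) F,
        φ (X * Y + Y * X) = φ X * φ Y + φ Y * φ X) ∧
      ¬ (∃ C : Matrix (Fin n) (Fin n) F, ∀ X, φ X = C) ∧
      ¬ (∀ X Y : Matrix (Fin n) (Fin n) F, φ (X + Y) = φ X + φ Y) := by
  classical
  have := ringChar.of_eq h2
  have : NeZero n := ⟨by omega⟩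
  let i : Fin n := ⟨0, by omega⟩
  let j : Fin n := ⟨1, by omega⟩
  have hij : i ≠ j := by simp [i, j, Fin.ext_iff]
  let A : Matrix (Fin n) (Fin n) F := Matrix.single i i 1
  let D : Matrix (Fin n) (Fin n) F := Matrix.single i j 1
  have hA : A.trace ≠ 0 := by simp [A, Matrix.trace_single_eq_same]
  have hA0 : A ≠ 0 := fun h => hA (by rw [h, Matrix.trace_zero])
  have hD0 : D ≠ 0 := fun h => by simpa [D] using congrFun (congrFun h i) j
  have hDA : D ≠ A := fun h => hA (h ▸ Matrix.trace_single_eq_of_ne i j 1 hij)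
  exact ⟨Pi.single A A, Pi.single_jordan_mul A (Matrix.ne_jordan_mul_of_trace_ne_zero hA),
    Pi.single_not_const hA0.symm hA0, Pi.single_not_additive hA0 hD0 hDA⟩
end
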